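/- Fix α > 0 and β > 0. Let (t_k)_{k≥1} be a strictly increasing sequence of positive integers with t₁ ≥ 1 and t_{k+1} ≥ (1+β) t_k for all k, and set α_j = α if j ∈ {t₁, t₂, …} and α_j = 0 otherwise. Then there exists a constant C > 0 such that Σ_n ≼ (C/n)·R for all n ≥ 1 (Loewner order); that is, resampling at times whose consecutive spacings grow geometrically yields the optimal convergence rate of the regularized particle filter covariance. -/

import Mathlib

/-
The matrix recursion is dominated, in the Loewner order, by a scalar one. Inversion is
operator-antitone (a Schur complement argument), so `u • Σ ≤ R` gives
`R ≤ R + Σ ≤ (1 + u⁻¹) • R`, hence `(u + 1) • R (R + Σ)⁻¹ Σ ≤ R`, using the identity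
`R (R + Σ)⁻¹ Σ = R (R⁻¹ - (R + Σ)⁻¹) R`. Thus `u_n • Σ_n ≤ R` for the scalars
`u_0 = 0`, `u_{n+1} = (u_n + 1) / (1 + α_{n+1})`, whatever `Σ_0` is.

The precision `u_n` gains `1` per step and is divided by `1 + α` at resampling times. With
`ε = β / ((1 + α)(1 + β) - 1)` and `τ_n ≤ n` the last resampling time, the invariant
`(n - τ_n) + ε τ_n ≤ u_n` survives a resampling at `t_{k+1}` because the preceding gap
`t_{k+1} - t_k` is at least `β t_k`. Hence `u_n ≥ ε n`, and `C = 1/ε` works.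
-/

open Matrix
open scoped MatrixOrder ComplexOrder

section Covariance

variable {n 𝕜 : Type*} [Fintype n] [DecidableEq n] [RCLike 𝕜]

namespace Matrix

theorem PosDef.isUnit_det {A : Matrix n n 𝕜} (hA : A.PosDef) : IsUnit A.det :=
  (isUnit_iff_isUnit_det A).mp hA.isUnit

theorem inv_real_smul {A : Matrix n n 𝕜} (h : IsUnit A.det) {r : ℝ} (hr : r ≠ 0) :
    (r • A)⁻¹ = r⁻¹ • A⁻¹ :=
  inv_eq_left_inv (by rw [smul_mul_smul_comm, inv_mul_cancel₀ hr, nonsing_inv_mul _ h, one_smul])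

theorem PosDef.inv_anti {A B : Matrix n n 𝕜} (hA : A.PosDef) (hAB : A ≤ B) : B⁻¹ ≤ A⁻¹ := by
  have hB : B.PosDef := by simpa using hA.add_posSemidef hAB
  let _ := hA.isUnit.invertible
  let _ := hB.isUnit.invertible
  -- `fromBlocks B 1 1 A⁻¹` is positive semidefinite iff either of its Schur complements is
  have h₁ := PosDef.fromBlocks₁₁ (1 : Matrix n n 𝕜) A⁻¹ hB
  have h₂ := PosDef.fromBlocks₂₂ B (1 : Matrix n n 𝕜) hA.inv
  simp only [conjTranspose_one, Matrix.one_mul, Matrix.mul_one, inv_inv_of_invertible] at h₁ h₂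
  exact h₁.mp (h₂.mpr hAB)

theorem mul_inv_add_mul_eq {R S : Matrix n n 𝕜} (hR : IsUnit R.det) (hRS : IsUnit (R + S).det) :
    R * (R + S)⁻¹ * S = R * (R⁻¹ - (R + S)⁻¹) * R := by
  calc R * (R + S)⁻¹ * S = R * (R + S)⁻¹ * (R + S) - R * (R + S)⁻¹ * R := by noncomm_ring
    _ = R * R⁻¹ * R - R * (R + S)⁻¹ * R := by
      simp only [Matrix.mul_assoc, nonsing_inv_mul _ hRS, mul_nonsing_inv_cancel_left _ _ hR,
        Matrix.mul_one]
    _ = R * (R⁻¹ - (R + S)⁻¹) * R := by noncomm_ring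

theorem PosDef.smul_inv_le_add_one_smul_inv_add {R S : Matrix n n 𝕜} (hR : R.PosDef)
    (hS : 0 ≤ S) {u : ℝ} (hu : 0 ≤ u) (huS : u • S ≤ R) : u • R⁻¹ ≤ (u + 1) • (R + S)⁻¹ := by
  have hRS : (R + S).PosDef := hR.add_posSemidef hS.posSemidef
  rcases hu.eq_or_lt with rfl | hu
  · simpa using hRS.inv.posSemidef.nonneg
  have hle : u • (R + S) ≤ (u + 1) • R := by
    rw [smul_add, add_smul, one_smul]
    exact add_le_add_right huS _
  have h := (hRS.smul hu).inv_anti hle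
  rw [inv_real_smul hR.isUnit_det (by positivity), inv_real_smul hRS.isUnit_det hu.ne'] at h
  have := smul_le_smul_of_nonneg_left h (by positivity : 0 ≤ u * (u + 1))
  rwa [smul_smul, smul_smul, mul_inv_cancel_right₀ (by positivity), mul_comm u,
    mul_inv_cancel_right₀ hu.ne'] at this

theorem PosDef.mul_inv_add_mul_nonneg {R S : Matrix n n 𝕜} (hR : R.PosDef) (hS : 0 ≤ S) :
    0 ≤ R * (R + S)⁻¹ * S := by
  have hRS : (R + S).PosDef := hR.add_posSemidef hS.posSemidef
  rw [mul_inv_add_mul_eq hR.isUnit_det hRS.isUnit_det]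
  exact hR.isHermitian.isSelfAdjoint.conjugate_nonneg
    (sub_nonneg.mpr (hR.inv_anti (le_add_of_nonneg_right hS)))

theorem PosDef.add_one_smul_mul_inv_add_mul_le {R S : Matrix n n 𝕜} (hR : R.PosDef)
    (hS : 0 ≤ S) {u : ℝ} (hu : 0 ≤ u) (huS : u • S ≤ R) :
    (u + 1) • (R * (R + S)⁻¹ * S) ≤ R := by
  have hRS : (R + S).PosDef := hR.add_posSemidef hS.posSemidef
  have h : (u + 1) • (R⁻¹ - (R + S)⁻¹) ≤ R⁻¹ := by
    rw [show (u + 1) • (R⁻¹ - (R + S)⁻¹) = R⁻¹ + (u • R⁻¹ - (u + 1) • (R + S)⁻¹) by module]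
    exact add_le_of_nonpos_right
      (sub_nonpos.mpr (hR.smul_inv_le_add_one_smul_inv_add hS hu huS))
  calc (u + 1) • (R * (R + S)⁻¹ * S) = R * ((u + 1) • (R⁻¹ - (R + S)⁻¹)) * R := by
        rw [mul_inv_add_mul_eq hR.isUnit_det hRS.isUnit_det, mul_smul_comm, smul_mul_assoc]
    _ ≤ R * R⁻¹ * R := hR.isHermitian.isSelfAdjoint.conjugate_le_conjugate h
    _ = R := by rw [mul_nonsing_inv _ hR.isUnit_det, Matrix.one_mul]

end Matrix

noncomputable def precisionBound (a : ℕ → ℝ) : ℕ → ℝ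
  | 0 => 0
  | m + 1 => (precisionBound a m + 1) / (1 + a (m + 1))

theorem precisionBound_nonneg {a : ℕ → ℝ} (ha : ∀ j, 0 ≤ a j) (m : ℕ) :
    0 ≤ precisionBound a m := by
  induction m with
  | zero => exact le_rfl
  | succ m ih => exact div_nonneg (by linarith) (by linarith [ha (m + 1)])

theorem precisionBound_smul_le {R : Matrix n n 𝕜} (hR : R.PosDef) {a : ℕ → ℝ}
    (ha : ∀ j, 0 ≤ a j) {S : ℕ → Matrix n n 𝕜} (hS₀ : 0 ≤ S 0)
    (hS : ∀ m, S (m + 1) = (1 + a (m + 1)) • (R * (R + S m)⁻¹ * S m)) (m : ℕ) :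
    0 ≤ S m ∧ precisionBound a m • S m ≤ R := by
  induction m with
  | zero => simpa [precisionBound] using ⟨hS₀, hR.posSemidef.nonneg⟩
  | succ m ih =>
    obtain ⟨hSm, hbound⟩ := ih
    have ha' : 0 < 1 + a (m + 1) := by linarith [ha (m + 1)]
    refine ⟨hS m ▸ smul_nonneg ha'.le (hR.mul_inv_add_mul_nonneg hSm), ?_⟩
    rw [hS m, smul_smul, precisionBound, div_mul_cancel₀ _ ha'.ne']
    exact hR.add_one_smul_mul_inv_add_mul_le hSm (precisionBound_nonneg ha m) hbound

end Covariance

theorem mul_le_precisionBound {P : ℕ → Prop} [DecidablePred P] {a : ℕ → ℝ} {α β : ℝ}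
    (hα : 0 ≤ α) (hβ : 0 < β) (ha₁ : ∀ j, P j → a j = α) (ha₀ : ∀ j, ¬P j → a j = 0)
    (hgap : ∀ m, P (m + 1) → (1 + β) * (Nat.findGreatest P m : ℝ) ≤ m + 1) (m : ℕ) :
    β / ((1 + α) * (1 + β) - 1) * m ≤ precisionBound a m := by
  set ε := β / ((1 + α) * (1 + β) - 1)
  have hD : 0 < (1 + α) * (1 + β) - 1 := by nlinarith
  have hεD : ε * ((1 + α) * (1 + β) - 1) = β := div_mul_cancel₀ β hD.ne'
  have hεα : ε * (1 + α) ≤ 1 := by nlinarith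
  have hτ (m : ℕ) : (Nat.findGreatest P m : ℝ) ≤ m := by exact_mod_cast Nat.findGreatest_le m
  -- `Nat.findGreatest P m` is the last resampling time up to `m` (or `0`)
  have hinvariant (m : ℕ) :
      (m - Nat.findGreatest P m : ℝ) + ε * Nat.findGreatest P m ≤ precisionBound a m := by
    induction m with
    | zero => simp [precisionBound]
    | succ m ih =>
      by_cases hP : P (m + 1)
      · rw [Nat.findGreatest_eq hP, precisionBound, ha₁ _ hP, le_div_iff₀ (by linarith)]
        have := hgap m hP
        push_cast
        nlinarith [hτ m]
      · rw [Nat.findGreatest_of_not hP, precisionBound, ha₀ _ hP, add_zero, div_one]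
        push_cast
        linarith
  nlinarith [hinvariant m, hτ m]

theorem monotoneOn_of_geometric_growth {t : ℕ → ℕ} {β : ℝ} (hβ : 0 ≤ β)
    (hgrow : ∀ k, 1 ≤ k → (1 + β) * (t k : ℝ) ≤ t (k + 1)) : MonotoneOn t (Set.Ici 1) :=
  monotoneOn_nat_Ici_of_le_succ fun k hk => by
    have := hgrow k hk
    exact_mod_cast (by nlinarith [(t k).cast_nonneg (α := ℝ)] : (t k : ℝ) ≤ t (k + 1))

theorem one_add_mul_findGreatest_le_of_geometric_growth {t : ℕ → ℕ} {β : ℝ} (hβ : 0 ≤ β)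
    (hgrow : ∀ k, 1 ≤ k → (1 + β) * (t k : ℝ) ≤ t (k + 1))
    [DecidablePred (· ∈ t '' Set.Ici 1)] {m : ℕ} (hm : m + 1 ∈ t '' Set.Ici 1) :
    (1 + β) * (Nat.findGreatest (· ∈ t '' Set.Ici 1) m : ℝ) ≤ m + 1 := by
  obtain ⟨k, hk, htk⟩ := hm
  set τ := Nat.findGreatest (· ∈ t '' Set.Ici 1) m with hτ
  rcases Nat.eq_zero_or_pos τ with h0 | hpos
  · rw [h0, Nat.cast_zero, mul_zero]
    positivity
  obtain ⟨j, hj, htj⟩ : τ ∈ t '' Set.Ici 1 := Nat.findGreatest_of_ne_zero hτ.symm hpos.ne'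
  have hmono := monotoneOn_of_geometric_growth hβ hgrow
  have hjk : j < k := by
    by_contra! h
    have := hmono hk hj h
    have : τ ≤ m := Nat.findGreatest_le m
    omega
  have hk₁ : k - 1 ∈ Set.Ici 1 := by
    rw [Set.mem_Ici] at hj ⊢
    omega
  calc (1 + β) * (τ : ℝ) ≤ (1 + β) * t (k - 1) := by
        rw [← htj]
        gcongr
        exact_mod_cast hmono hj hk₁ (by omega)
    _ ≤ t (k - 1 + 1) := hgrow _ hk₁
    _ = m + 1 := by rw [Nat.sub_add_cancel (by omega), htk, Nat.cast_succ]

theorem stmt_16_general {d : ℕ}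
    (R S0 : Matrix (Fin d) (Fin d) ℝ) (hR : R.PosDef) (hS0pd : S0.PosDef)
    (α β : ℝ) (hα : 0 < α) (hβ : 0 < β)
    (t : ℕ → ℕ)
    (htgrow : ∀ k : ℕ, 1 ≤ k → (1 + β) * (t k : ℝ) ≤ (t (k + 1) : ℝ))
    (αseq : ℕ → ℝ)
    (hαseq₁ : ∀ j : ℕ, (∃ k : ℕ, 1 ≤ k ∧ t k = j) → αseq j = α)
    (hαseq₂ : ∀ j : ℕ, (¬∃ k : ℕ, 1 ≤ k ∧ t k = j) → αseq j = 0)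
    (S : ℕ → Matrix (Fin d) (Fin d) ℝ) (hS0 : S 0 = S0)
    (hrec : ∀ n, S (n + 1) = (1 + αseq (n + 1)) • (R * (R + S n)⁻¹ * S n)) :
    ∃ C > 0, ∀ n : ℕ, 1 ≤ n → ((C / (n : ℝ)) • R - S n).PosSemidef := by
  classical
  set ε := β / ((1 + α) * (1 + β) - 1)
  have hε : 0 < ε := div_pos hβ (by nlinarith)
  have hαseq (j : ℕ) : 0 ≤ αseq j := by
    by_cases h : ∃ k, 1 ≤ k ∧ t k = j
    · exact (hαseq₁ j h).symm ▸ hα.le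
    · exact (hαseq₂ j h).symm ▸ le_rfl
  have hprecision := mul_le_precisionBound (P := (· ∈ t '' Set.Ici 1)) hα.le hβ hαseq₁ hαseq₂
    fun m hm => one_add_mul_findGreatest_le_of_geometric_growth hβ.le htgrow hm
  refine ⟨ε⁻¹, inv_pos.mpr hε, fun n hn => ?_⟩
  obtain ⟨hSn, hbound⟩ := precisionBound_smul_le hR hαseq (hS0 ▸ hS0pd.posSemidef.nonneg) hrec n
  have hεn : 0 < ε * n := mul_pos hε (by exact_mod_cast hn)
  have hεnS : (ε * n) • S n ≤ R := (smul_le_smul_of_nonneg_right (hprecision n) hSn).trans hbound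
  rwa [← le_inv_smul_iff_of_pos hεn, mul_inv, ← div_eq_mul_inv] at hεnS

/-- Resampling at times whose consecutive spacings grow geometrically (ratio `1+β`)
yields the optimal rate: `Σ_n ≼ (C/n) R` (Loewner order) for some `C > 0`. -/
theorem stmt_16 {d : ℕ} (hd : 1 ≤ d)
    (R S0 : Matrix (Fin d) (Fin d) ℝ) (hR : R.PosDef) (hS0pd : S0.PosDef)
    (α β : ℝ) (hα : 0 < α) (hβ : 0 < β)
    (t : ℕ → ℕ) (ht1 : 1 ≤ t 1) (htmono : ∀ k : ℕ, 1 ≤ k → t k < t (k + 1))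
    (htgrow : ∀ k : ℕ, 1 ≤ k → (1 + β) * (t k : ℝ) ≤ (t (k + 1) : ℝ))
    (αseq : ℕ → ℝ)
    (hαseq₁ : ∀ j : ℕ, (∃ k : ℕ, 1 ≤ k ∧ t k = j) → αseq j = α)
    (hαseq₂ : ∀ j : ℕ, (¬∃ k : ℕ, 1 ≤ k ∧ t k = j) → αseq j = 0)
    (S : ℕ → Matrix (Fin d) (Fin d) ℝ) (hS0 : S 0 = S0)
    (hrec : ∀ n, S (n + 1) = (1 + αseq (n + 1)) • (R * (R + S n)⁻¹ * S n)) :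
    ∃ C > 0, ∀ n : ℕ, 1 ≤ n → ((C / (n : ℝ)) • R - S n).PosSemidef :=
  stmt_16_general R S0 hR hS0pd α β hα hβ t htgrow αseq hαseq₁ hαseq₂ S hS0 hrec
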